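/- arXiv:1907.13604 — 2 statements merged into one kernel-verified Lean document; each statement's English description precedes it below -/
import Mathlib

section
/- For every positive integer m, the L² norm on [0,1] of the m-th derivative of p_m satisfies ‖p_m^{(m)}‖² = (2m-2)!(2m-1)!/(m-1)!². -/
/-!
Since `p_m' = c · (x(1-x))^(m-1)` with `c = (2m-1)!/(m-1)!²`, the integrand is
`c² (D^(m-1) q)²` for the polynomial `q = (X(1-X))^(m-1)`. Every `D^k q` with `k < m-1` vanishes
at `0` and `1`, so `m-1` integrations by parts without boundary terms turn `∫ (D^(m-1) q)²` into
`(-1)^(m-1) ∫ q · D^(2m-2) q`. The top derivative `D^(2m-2) q` is the constant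
`(2m-2)! (-1)^(m-1)`, and the remaining Beta integral is
`∫ x^(m-1) (1-x)^(m-1) = (m-1)!²/(2m-1)!`.
-/

open MeasureTheory intervalIntegral

/-- The regularised incomplete Beta function `I(m,m;x)`. -/
noncomputable def pBeta (m : ℕ) (x : ℝ) : ℝ :=
  (((2*m-1).factorial : ℝ) / ((m-1).factorial : ℝ)^2) *
    ∫ y in (0:ℝ)..x, y^(m-1) * (1-y)^(m-1)

open Polynomial Nat

theorem integral_pow_mul_one_sub_pow (a b : ℕ) :
    ∫ x in (0:ℝ)..1, x ^ a * (1 - x) ^ b = (a ! * b ! / (a + b + 1) ! : ℝ) := by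
  have h := Complex.betaIntegral_eq_Gamma_mul_div (a + 1) (b + 1)
    (by simp; positivity) (by simp; positivity)
  have hab : (a : ℂ) + 1 + (b + 1) = ((a + b + 1 : ℕ) : ℂ) + 1 := by push_cast; ring
  simp only [Complex.betaIntegral, add_sub_cancel_right, Complex.cpow_natCast, hab,
    Complex.Gamma_nat_eq_factorial] at h
  apply Complex.ofReal_injective
  rw [← intervalIntegral.integral_ofReal]
  push_cast
  exact h

namespace Polynomial

section Algebra

variable {R : Type*}

theorem iterate_derivative_natDegree_self [Semiring R] (p : R[X]) :
    derivative^[p.natDegree] p = C (p.natDegree ! • p.leadingCoeff) := by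
  rw [eq_C_of_natDegree_le_zero (p := derivative^[p.natDegree] p)
      (by simpa using natDegree_iterate_derivative p p.natDegree),
    coeff_iterate_derivative, zero_add, Nat.descFactorial_self, leadingCoeff]

theorem isRoot_iterate_derivative_pow [CommSemiring R] {p : R[X]} {a : R} (hp : p.IsRoot a)
    {n k : ℕ} (hk : k < n) : (derivative^[k] (p ^ n)).IsRoot a := by
  obtain ⟨r, hr⟩ := pow_sub_dvd_iterate_derivative_pow p n k
  rw [hr, IsRoot, eval_mul, eval_pow, hp.eq_zero, zero_pow (by omega), zero_mul]

theorem X_mul_one_sub_X_eq_neg [CommRing R] : (X * (1 - X) : R[X]) = -(X * (X - C 1)) := by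
  rw [map_one]; ring

variable [CommRing R] [IsDomain R]

theorem natDegree_X_mul_one_sub_X : (X * (1 - X) : R[X]).natDegree = 2 := by
  rw [X_mul_one_sub_X_eq_neg, natDegree_neg, natDegree_mul X_ne_zero (X_sub_C_ne_zero 1),
    natDegree_X, natDegree_X_sub_C]

theorem leadingCoeff_X_mul_one_sub_X : (X * (1 - X) : R[X]).leadingCoeff = -1 := by
  rw [X_mul_one_sub_X_eq_neg, leadingCoeff_neg, leadingCoeff_mul, leadingCoeff_X,
    leadingCoeff_X_sub_C, one_mul]

theorem iterate_derivative_two_mul_X_mul_one_sub_X_pow (n : ℕ) :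
    derivative^[2 * n] ((X * (1 - X) : R[X]) ^ n) = C (((2 * n)! : R) * (-1) ^ n) := by
  have h := iterate_derivative_natDegree_self ((X * (1 - X) : R[X]) ^ n)
  rwa [natDegree_pow, natDegree_X_mul_one_sub_X, leadingCoeff_pow, leadingCoeff_X_mul_one_sub_X,
    nsmul_eq_mul, mul_comm n] at h

end Algebra

theorem iteratedDeriv_eval {𝕜 : Type*} [NontriviallyNormedField 𝕜] (k : ℕ) (p : 𝕜[X]) :
    iteratedDeriv k (fun x => p.eval x) = fun x => (derivative^[k] p).eval x := by
  induction k generalizing p with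
  | zero => simp
  | succ k ih =>
    have h : _root_.deriv (fun x => p.eval x) = fun x => (derivative p).eval x := by
      ext x; exact p.deriv
    rw [iteratedDeriv_succ', h, ih, Function.iterate_succ_apply]

theorem integral_derivative_mul_eq_neg {a b : ℝ} {P : ℝ[X]} (ha : P.IsRoot a) (hb : P.IsRoot b)
    (Q : ℝ[X]) :
    ∫ x in a..b, (derivative P).eval x * Q.eval x =
      -∫ x in a..b, P.eval x * (derivative Q).eval x := by
  have h := integral_mul_deriv_eq_deriv_mul (a := a) (b := b) (fun x _ => Q.hasDerivAt x)
    (fun x _ => P.hasDerivAt x) (Q.derivative.continuous.intervalIntegrable _ _)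
    (P.derivative.continuous.intervalIntegrable _ _)
  simpa [mul_comm, ha.eq_zero, hb.eq_zero] using h

theorem integral_iterate_derivative_mul {a b : ℝ} {P : ℝ[X]} {j : ℕ}
    (hP : ∀ k < j, (derivative^[k] P).IsRoot a ∧ (derivative^[k] P).IsRoot b) (Q : ℝ[X]) :
    ∫ x in a..b, (derivative^[j] P).eval x * Q.eval x =
      (-1) ^ j * ∫ x in a..b, P.eval x * (derivative^[j] Q).eval x := by
  induction j generalizing Q with
  | zero => simp
  | succ j ih =>
    obtain ⟨ha, hb⟩ := hP j j.lt_succ_self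
    rw [Function.iterate_succ_apply', integral_derivative_mul_eq_neg ha hb,
      ih (fun k hk => hP k (hk.trans j.lt_succ_self)), Function.iterate_succ_apply, pow_succ]
    ring

theorem integral_sq_iterate_derivative_X_mul_one_sub_X_pow (n : ℕ) :
    ∫ x in (0:ℝ)..1, ((derivative^[n] ((X * (1 - X) : ℝ[X]) ^ n)).eval x) ^ 2 =
      (2 * n)! * (n ! * n !) / (2 * n + 1)! := by
  set q : ℝ[X] := (X * (1 - X)) ^ n
  have hroots (k : ℕ) (hk : k < n) :
      (derivative^[k] q).IsRoot 0 ∧ (derivative^[k] q).IsRoot 1 :=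
    ⟨isRoot_iterate_derivative_pow (by simp) hk, isRoot_iterate_derivative_pow (by simp) hk⟩
  calc ∫ x in (0:ℝ)..1, ((derivative^[n] q).eval x) ^ 2
      = ∫ x in (0:ℝ)..1, (derivative^[n] q).eval x * (derivative^[n] q).eval x := by
        simp_rw [sq]
    _ = (-1) ^ n * ∫ x in (0:ℝ)..1, q.eval x * (derivative^[2 * n] q).eval x := by
        rw [integral_iterate_derivative_mul hroots, ← Function.iterate_add_apply, two_mul]
    _ = (-1) ^ n * ((2 * n)! * (-1) ^ n * ∫ x in (0:ℝ)..1, x ^ n * (1 - x) ^ n) := by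
        rw [iterate_derivative_two_mul_X_mul_one_sub_X_pow,
          ← intervalIntegral.integral_const_mul (((2 * n)! : ℝ) * (-1) ^ n)]
        congr 1
        refine intervalIntegral.integral_congr fun x _ => ?_
        simp only [q, eval_pow, eval_mul, eval_X, eval_sub, eval_one, eval_C, mul_pow]
        ring
    _ = (2 * n)! * (n ! * n !) / (2 * n + 1)! := by
        have hsign : ((-1 : ℝ)) ^ n * (-1) ^ n = 1 := by rw [← mul_pow]; norm_num
        rw [integral_pow_mul_one_sub_pow, ← two_mul]
        linear_combination ((2 * n)! * (n ! * n !) / (2 * n + 1)! : ℝ) * hsign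

end Polynomial

theorem hasDerivAt_pBeta_succ (n : ℕ) (x : ℝ) :
    HasDerivAt (pBeta (n + 1)) ((2 * n + 1)! / (n ! : ℝ) ^ 2 * (x ^ n * (1 - x) ^ n)) x := by
  have hcont : Continuous fun y : ℝ => y ^ n * (1 - y) ^ n := by fun_prop
  exact (integral_hasDerivAt_right (hcont.intervalIntegrable 0 x)
    (hcont.stronglyMeasurableAtFilter _ _) hcont.continuousAt).const_mul _

theorem iteratedDeriv_pBeta_succ (n : ℕ) :
    iteratedDeriv (n + 1) (pBeta (n + 1)) = fun x =>
      (2 * n + 1)! / (n ! : ℝ) ^ 2 * (derivative^[n] ((X * (1 - X) : ℝ[X]) ^ n)).eval x := by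
  have hderiv : deriv (pBeta (n + 1)) =
      fun x => (C ((2 * n + 1)! / (n ! : ℝ) ^ 2) * (X * (1 - X)) ^ n).eval x := by
    ext x
    simp [(hasDerivAt_pBeta_succ n x).deriv, mul_pow]
  rw [iteratedDeriv_succ', hderiv, iteratedDeriv_eval, iterate_derivative_C_mul]
  simp

theorem pBeta_iteratedDeriv_m_norm_sq (m : ℕ) (hm : 1 ≤ m) :
    ∫ t in (0:ℝ)..1, (iteratedDeriv m (pBeta m) t)^2 =
      ((2*m-2).factorial : ℝ) * ((2*m-1).factorial : ℝ) / ((m-1).factorial : ℝ)^2 := by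
  obtain ⟨n, rfl⟩ : ∃ n, m = n + 1 := ⟨m - 1, by omega⟩
  rw [show 2 * (n + 1) - 2 = 2 * n by omega, show 2 * (n + 1) - 1 = 2 * n + 1 by omega,
    Nat.add_sub_cancel, iteratedDeriv_pBeta_succ]
  simp_rw [mul_pow _ (eval _ _)]
  rw [intervalIntegral.integral_const_mul, integral_sq_iterate_derivative_X_mul_one_sub_X_pow]
  field_simp
end

section
/- For every positive integer m, the quantity A_m = 1/2 - (2m)!⁴/(4·(4m)!·m!⁴) satisfies 1/3 ≤ A_m < 1/2, and A_m → 1/2 as m → ∞. -/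
/-- The closed-form value `A_m = 1/2 - (2m)!⁴/(4·(4m)!·m!⁴)` of `∫₀¹ I(m,m;t)² dt`. -/
noncomputable def Aclosed (m : ℕ) : ℝ :=
  1/2 - ((2*m).factorial : ℝ)^4 / (4 * ((4*m).factorial : ℝ) * ((m.factorial : ℝ))^4)

/-!
Write `A_m = 1/2 - c_m`. Passing from `m` to `m + 1` multiplies `c_m` by
`r_m = 4(2m+1)³ / ((2m+2)(4m+1)(4m+3))`. Since `r_m ≤ 1`, `c_m` decreases from `c_1 = 1/6`,
which gives `1/3 ≤ A_m < 1/2`. Moreover `(2m+3) r_m² ≤ 2m+1` for `m ≥ 1`, so `(2m+1) c_m²`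
is also decreasing there; hence `c_m² ≤ 1/(12(2m+1)) → 0`.
-/

open Filter Topology

noncomputable def aclosedDefect (m : ℕ) : ℝ :=
  ((2*m).factorial : ℝ)^4 / (4 * ((4*m).factorial : ℝ) * ((m.factorial : ℝ))^4)

lemma Aclosed_eq_half_sub (m : ℕ) : Aclosed m = 1/2 - aclosedDefect m := rfl

lemma aclosedDefect_pos (m : ℕ) : 0 < aclosedDefect m := by
  unfold aclosedDefect
  positivity

lemma aclosedDefect_one : aclosedDefect 1 = 1/6 := by
  norm_num [aclosedDefect, Nat.factorial]

lemma aclosedDefect_succ (m : ℕ) :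
    aclosedDefect (m+1) =
      aclosedDefect m * (4*(2*m+1)^3 / ((2*m+2)*(4*m+1)*(4*m+3))) := by
  have h2 : (2*(m+1)).factorial = (2*m+2) * (2*m+1) * (2*m).factorial := by
    rw [show 2*(m+1) = 2*m+1+1 by ring, Nat.factorial_succ, Nat.factorial_succ]
    ring
  have h4 : (4*(m+1)).factorial =
      (4*m+4) * (4*m+3) * (4*m+2) * (4*m+1) * (4*m).factorial := by
    rw [show 4*(m+1) = 4*m+3+1 by ring, Nat.factorial_succ,
      show 4*m+3 = 4*m+2+1 by ring, Nat.factorial_succ,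
      show 4*m+2 = 4*m+1+1 by ring, Nat.factorial_succ, Nat.factorial_succ]
    ring
  unfold aclosedDefect
  rw [h2, h4, Nat.factorial_succ]
  push_cast
  field_simp
  ring

lemma antitone_aclosedDefect : Antitone aclosedDefect := by
  refine antitone_nat_of_succ_le fun m => ?_
  have ratio_le_one : 4*(2*(m:ℝ)+1)^3 / ((2*m+2)*(4*m+1)*(4*m+3)) ≤ 1 := by
    rw [div_le_one (by positivity)]
    nlinarith [(Nat.cast_nonneg m : (0:ℝ) ≤ m)]
  rw [aclosedDefect_succ]
  exact mul_le_of_le_one_right (aclosedDefect_pos m).le ratio_le_one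

lemma antitoneOn_two_mul_add_one_mul_aclosedDefect_sq :
    AntitoneOn (fun m : ℕ => (2*(m:ℝ)+1) * aclosedDefect m ^ 2) (Set.Ici 1) := by
  refine antitoneOn_nat_Ici_of_succ_le fun m (hm : 1 ≤ m) => ?_
  have hm' : (1:ℝ) ≤ m := by exact_mod_cast hm
  have ratio_sq_le : (2*(m:ℝ)+3) * (4*(2*m+1)^3 / ((2*m+2)*(4*m+1)*(4*m+3)))^2 ≤ 2*m+1 := by
    rw [div_pow, mul_div_assoc', div_le_iff₀ (by positivity)]
    nlinarith [sq_nonneg ((m:ℝ)-1), pow_pos (by linarith : (0:ℝ) < m) 3]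
  rw [aclosedDefect_succ, mul_pow]
  push_cast
  calc (2*((m:ℝ)+1)+1) * (aclosedDefect m ^ 2 * _)
      = aclosedDefect m ^ 2 * ((2*(m:ℝ)+3) * _) := by ring
    _ ≤ aclosedDefect m ^ 2 * (2*m+1) := mul_le_mul_of_nonneg_left ratio_sq_le (sq_nonneg _)
    _ = (2*(m:ℝ)+1) * aclosedDefect m ^ 2 := mul_comm _ _

lemma Filter.Tendsto.of_sq_nhds_zero {α : Type*} {l : Filter α} {u : α → ℝ}
    (hu : ∀ a, 0 ≤ u a) (h : Tendsto (fun a => u a ^ 2) l (𝓝 0)) : Tendsto u l (𝓝 0) := by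
  simpa [Real.sqrt_sq (hu _)] using h.sqrt

lemma tendsto_aclosedDefect : Tendsto aclosedDefect atTop (𝓝 0) := by
  refine Tendsto.of_sq_nhds_zero (fun m => (aclosedDefect_pos m).le) ?_
  refine squeeze_zero' (Eventually.of_forall fun m => sq_nonneg _) ?_
    tendsto_one_div_atTop_nhds_zero_nat
  filter_upwards [eventually_ge_atTop 1] with m hm
  have h : (2*(m:ℝ)+1) * aclosedDefect m ^ 2 ≤ 1/12 := by
    have := antitoneOn_two_mul_add_one_mul_aclosedDefect_sq Set.self_mem_Ici hm hm
    norm_num [aclosedDefect_one] at this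
    linarith
  have hm' : (1:ℝ) ≤ m := by exact_mod_cast hm
  rw [le_div_iff₀ (by linarith)]
  nlinarith [sq_nonneg (aclosedDefect m)]

theorem Aclosed_bounds_and_limit :
    (∀ m : ℕ, 1 ≤ m → 1/3 ≤ Aclosed m ∧ Aclosed m < 1/2) ∧
    Filter.Tendsto Aclosed Filter.atTop (nhds (1/2)) := by
  refine ⟨fun m hm => ?_, ?_⟩
  · have h_le := antitone_aclosedDefect hm
    rw [aclosedDefect_one] at h_le
    have h_pos := aclosedDefect_pos m
    rw [Aclosed_eq_half_sub]
    constructor <;> linarith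
  · have h := tendsto_aclosedDefect.const_sub (1/2 : ℝ)
    rwa [sub_zero] at h
end
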